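/- arXiv:2106.13981 — 8 statements merged into one kernel-verified Lean document; each statement's English description precedes it below -/
import Mathlib

section
/- Let n and m be positive integers with m ≤ n, and let a_1 < a_2 < ... < a_m be distinct positive integers. Consider the power sum map φ : ℂ^n → ℂ^m whose j-th coordinate is φ_j(x) = x_1^{a_j} + x_2^{a_j} + ... + x_n^{a_j}. Then φ is dominant; that is, the image of φ is dense in ℂ^m (with respect to the standard Euclidean topology on ℂ^m). -/
/-!
The power sums `p_j = ∑ i, X i ^ a j` in `m` variables have Jacobian determinant
`(∏ j, a j) * det (X i ^ (a j - 1))`, and this generalized Vandermonde determinant is a nonzero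
polynomial. In characteristic zero this makes the `p_j` algebraically independent, hence a
transcendence basis of `ℂ[X_1, …, X_m]`. So every `X i` is algebraic over `ℂ[p]`, and after
inverting a suitable nonzero `D ∈ ℂ[p]` the ring `ℂ[X]` becomes integral over `ℂ[p]`. Lying over
and the Nullstellensatz then put every `y` with `D(y) ≠ 0` in the image, and `{D ≠ 0}` is dense.
For `n > m`, pad with zero coordinates.
-/

open MvPolynomial

namespace MvPolynomial

variable {R σ ι : Type*}

theorem pderiv_aeval [CommSemiring R] [Fintype ι] (p : ι → MvPolynomial σ R)
    (q : MvPolynomial ι R) (i : σ) :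
    pderiv i (aeval p q) = ∑ j, aeval p (pderiv j q) * pderiv i (p j) := by
  classical
  induction q using MvPolynomial.induction_on with
  | C c => simp
  | add q r hq hr => simp only [map_add, hq, hr, add_mul, Finset.sum_add_distrib]
  | mul_X q k hq =>
    simp only [map_mul, aeval_X, Derivation.leibniz, smul_eq_mul, hq, pderiv_X, Pi.single_apply,
      mul_ite, mul_one, mul_zero, map_add, add_mul, Finset.sum_add_distrib, Finset.mul_sum]
    simp [apply_ite, Finset.sum_ite_eq, mul_comm, mul_left_comm]

theorem eq_C_of_pderiv_eq_zero [CommSemiring R] [NoZeroDivisors R] [CharZero R]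
    {q : MvPolynomial σ R} (h : ∀ i, pderiv i q = 0) :
    q = C (coeff 0 q) := by
  classical
  ext m
  rw [coeff_C]
  split_ifs with hm
  · rw [hm]
  obtain ⟨i, hi⟩ : ∃ i, m i ≠ 0 := by
    by_contra! H
    exact hm (Finsupp.ext H).symm
  have hcoeff := coeff_pderiv (i := i) q (m - Finsupp.single i 1)
  rw [h i, coeff_zero, tsub_add_cancel_of_le
    (Finsupp.single_le_iff.mpr (Nat.one_le_iff_ne_zero.mpr hi))] at hcoeff
  exact (mul_eq_zero.mp hcoeff.symm).resolve_right (Nat.cast_add_one_ne_zero _)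

theorem totalDegree_pderiv_lt [CommSemiring R] {q : MvPolynomial σ R} {i : σ}
    (h : pderiv i q ≠ 0) :
    (pderiv i q).totalDegree < q.totalDegree := by
  classical
  have hle : ∀ m ∈ (pderiv i q).support, m.degree + 1 ≤ q.totalDegree := fun m hm => by
    have hm' : coeff (m + Finsupp.single i 1) q ≠ 0 := fun h0 =>
      mem_support_iff.mp hm (by rw [coeff_pderiv, h0, zero_mul])
    have := le_totalDegree (mem_support_iff.mpr hm')
    change Finsupp.degree _ ≤ _ at this
    simpa using this
  obtain ⟨m₀, hm₀⟩ := support_nonempty.mpr h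
  have hq := hle m₀ hm₀
  have : (pderiv i q).totalDegree ≤ q.totalDegree - 1 := Finset.sup_le fun m hm => by
    have := hle m hm
    change m.degree ≤ _
    omega
  omega

theorem algebraicIndependent_of_det_pderiv_ne_zero [CommRing R] [IsDomain R] [CharZero R]
    [Fintype σ] [DecidableEq σ] (p : σ → MvPolynomial σ R)
    (hp : (Matrix.of fun i j => pderiv i (p j)).det ≠ 0) : AlgebraicIndependent R p := by
  rw [algebraicIndependent_iff_injective_aeval, injective_iff_map_eq_zero]
  suffices ∀ d, ∀ q : MvPolynomial σ R, q.totalDegree < d → aeval p q = 0 → q = 0 from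
    fun q => this _ q (Nat.lt_succ_self _)
  intro d
  induction d with
  | zero => exact fun q hq => absurd hq (Nat.not_lt_zero _)
  | succ d ih =>
    intro q hdeg hq
    -- Chain rule: the Jacobian kills `((∂ⱼ q)(p))ⱼ`, so these lower-degree relations vanish too.
    have hchain :
        (Matrix.of fun i j => pderiv i (p j)).mulVec (fun j => aeval p (pderiv j q)) = 0 := by
      funext i
      simp only [Matrix.mulVec, dotProduct, Matrix.of_apply, Pi.zero_apply]
      rw [← map_zero (pderiv i), ← hq, pderiv_aeval]
      simp only [mul_comm]
    have hpderiv : ∀ j, pderiv j q = 0 := fun j => by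
      by_contra hj
      exact hj <| ih _ (by have := totalDegree_pderiv_lt hj; omega)
        (congrFun (Matrix.eq_zero_of_mulVec_eq_zero hp hchain) j)
    rw [eq_C_of_pderiv_eq_zero hpderiv] at hq ⊢
    rwa [aeval_C, algebraMap_eq] at hq

theorem det_X_pow_ne_zero [CommRing R] [Nontrivial R] [Fintype σ] [DecidableEq σ]
    {b : σ → ℕ} (hb : Function.Injective b) :
    (Matrix.of fun i j => (X i ^ b j : MvPolynomial σ R)).det ≠ 0 := by
  -- `e τ` is the exponent of the Leibniz term of `τ`; only `τ = 1` contributes to `X ^ e 1`.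
  let e : Equiv.Perm σ → σ →₀ ℕ := fun τ => Finsupp.indicator Finset.univ fun k _ => b (τ.symm k)
  have he : ∀ τ, e τ = e 1 → τ = 1 := fun τ h => by
    ext k
    have := DFunLike.congr_fun h (τ k)
    simp only [e, Finsupp.indicator_apply, Finset.mem_univ, dite_true,
      Equiv.symm_apply_apply] at this
    simpa [← Equiv.Perm.inv_def] using (hb this).symm
  have hterm : ∀ τ : Equiv.Perm σ,
      ∏ j, (Matrix.of fun i j => (X i ^ b j : MvPolynomial σ R)) (τ j) j = monomial (e τ) 1 := by
    intro τ
    calc ∏ j, (X (τ j) : MvPolynomial σ R) ^ b j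
        = ∏ j, (X (τ j) : MvPolynomial σ R) ^ b (τ.symm (τ j)) := by simp
      _ = ∏ k, X k ^ b (τ.symm k) := Equiv.prod_comp τ fun k => X k ^ b (τ.symm k)
      _ = monomial (e τ) 1 := prod_X_pow _ _
  intro h
  have hcoeff := congrArg (coeff (e 1)) h
  simp only [Matrix.det_apply, hterm, coeff_sum, coeff_smul, coeff_monomial, coeff_zero] at hcoeff
  rw [Finset.sum_eq_single 1 (fun τ _ hτ => by rw [if_neg (mt (he τ) hτ), smul_zero])
    (by simp)] at hcoeff
  simp at hcoeff

theorem pderiv_sum_X_pow [CommSemiring R] [Fintype σ] (i : σ) (n : ℕ) :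
    pderiv i (∑ k, (X k : MvPolynomial σ R) ^ n) = (n : MvPolynomial σ R) * X i ^ (n - 1) := by
  classical
  simp [pderiv_X, Pi.single_apply]

theorem algebraicIndependent_sum_X_pow [CommRing R] [IsDomain R] [CharZero R]
    [Fintype σ] {a : σ → ℕ} (ha : Function.Injective a) (hpos : ∀ j, 0 < a j) :
    AlgebraicIndependent R fun j => ∑ i, (X i : MvPolynomial σ R) ^ a j := by
  classical
  apply algebraicIndependent_of_det_pderiv_ne_zero
  simp only [pderiv_sum_X_pow]
  have hdet := Matrix.det_mul_row (fun j => (a j : MvPolynomial σ R))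
    (Matrix.of fun i j => X i ^ (a j - 1))
  simp only [Matrix.of_apply] at hdet
  rw [hdet]
  refine mul_ne_zero (Finset.prod_ne_zero_iff.mpr fun j _ => ?_) (det_X_pow_ne_zero ?_)
  · exact_mod_cast (hpos j).ne'
  · intro j k hjk
    exact ha (by have := hpos j; have := hpos k; simp only at hjk; omega)

theorem exists_pow_mul_mem_of_mul_X_mem [CommSemiring R]
    {T : Subalgebra R (MvPolynomial σ R)} {c : MvPolynomial σ R} (hc : c ∈ T)
    (hX : ∀ i, c * X i ∈ T) (g : MvPolynomial σ R) : ∃ N, c ^ N * g ∈ T := by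
  induction g using MvPolynomial.induction_on with
  | C r => exact ⟨0, by simpa using T.algebraMap_mem r⟩
  | add f g hf hg =>
    obtain ⟨M, hM⟩ := hf
    obtain ⟨N, hN⟩ := hg
    refine ⟨M + N, ?_⟩
    rw [show c ^ (M + N) * (f + g) = c ^ N * (c ^ M * f) + c ^ M * (c ^ N * g) by ring]
    exact T.add_mem (T.mul_mem (T.pow_mem hc N) hM) (T.mul_mem (T.pow_mem hc M) hN)
  | mul_X f i hf =>
    obtain ⟨N, hN⟩ := hf
    exact ⟨N + 1, by rw [pow_succ, mul_mul_mul_comm]; exact T.mul_mem hN (hX i)⟩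

theorem exists_ne_zero_forall_pow_smul_mem_integralClosure {K : Type*} [CommRing K] [IsDomain K]
    [Finite σ] (S : Subalgebra K (MvPolynomial σ K)) [Algebra.IsAlgebraic S (MvPolynomial σ K)] :
    ∃ c : S, c ≠ 0 ∧ ∀ a : MvPolynomial σ K, ∃ N, c ^ N • a ∈ integralClosure S _ := by
  classical
  have := Fintype.ofFinite σ
  choose d hd0 hdint using fun i =>
    (Algebra.IsAlgebraic.isAlgebraic (R := S) (X i : MvPolynomial σ K)).exists_integral_multiple
  refine ⟨∏ i, d i, Finset.prod_ne_zero_iff.mpr fun i _ => hd0 i, fun a => ?_⟩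
  simp only [Algebra.smul_def, map_pow]
  refine exists_pow_mul_mem_of_mul_X_mem
    (T := (integralClosure S (MvPolynomial σ K)).restrictScalars K)
    isIntegral_algebraMap (fun i => ?_) a
  rw [← Finset.mul_prod_erase _ _ (Finset.mem_univ i), map_mul, mul_right_comm,
    ← Algebra.smul_def]
  exact (hdint i).mul isIntegral_algebraMap

theorem dense_setOf_eval_ne_zero {K : Type*} [NontriviallyNormedField K]
    {D : MvPolynomial ι K} (hD : D ≠ 0) : Dense {y : ι → K | eval y D ≠ 0} := by
  obtain ⟨z, hz⟩ : ∃ z, eval z D ≠ 0 := by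
    by_contra! h
    exact hD (MvPolynomial.funext fun x => by simp [h x])
  intro y
  let line : K → ι → K := fun t => y + t • (z - y)
  let q : Polynomial K :=
    aeval (fun j => Polynomial.C (y j) + Polynomial.X * Polynomial.C (z j - y j)) D
  have hq : ∀ t, q.eval t = eval (line t) D := fun t => by
    rw [← Polynomial.coe_aeval_eq_eval, ← AlgHom.comp_apply, comp_aeval]
    rw [← coe_aeval_eq_eval]
    refine congrArg (fun v => aeval v D) (_root_.funext fun j => ?_)
    simp [line]
  have hq0 : q ≠ 0 := fun h => hz (by simpa [line, h] using (hq 1).symm)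
  have hline : Continuous line := by fun_prop
  have := map_mem_closure (t := {y | eval y D ≠ 0}) hline
    (dense_univ.sdiff_finite (Polynomial.finite_setOfPred_isRoot hq0) 0)
    (fun t ht => by simpa [hq] using ht.2)
  simpa [line] using this

end MvPolynomial

theorem Ideal.map_ne_top_of_pow_smul_mem_integralClosure {S A : Type*} [CommRing S] [CommRing A]
    [Algebra S A] (hinj : Function.Injective (algebraMap S A)) {c : S}
    (hc : ∀ a : A, ∃ N, c ^ N • a ∈ integralClosure S A) {P : Ideal S} [P.IsPrime]
    (hcP : c ∉ P) : P.map (algebraMap S A) ≠ ⊤ := by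
  set T := integralClosure S A
  have hinjT : Function.Injective (algebraMap S T) := fun x y h => hinj (congrArg Subtype.val h)
  obtain ⟨Q, -, hQ, hQP⟩ := Ideal.exists_ideal_over_prime_of_isIntegral P (⊥ : Ideal T)
    (by rw [← RingHom.ker_eq_comap_bot, (RingHom.injective_iff_ker_eq_bot _).mp hinjT]
        exact bot_le)
  have hclear : ∀ a ∈ P.map (algebraMap S A), ∃ N, ∃ q ∈ Q, (q : A) = c ^ N • a := by
    intro a ha
    induction ha using Submodule.span_induction with
    | mem x hx =>
      obtain ⟨s, hs, rfl⟩ := hx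
      exact ⟨0, algebraMap S T s, by rwa [← Ideal.mem_comap, hQP], by simp⟩
    | zero => exact ⟨0, 0, Q.zero_mem, by simp⟩
    | add x y _ _ hx hy =>
      obtain ⟨M, q, hq, hqx⟩ := hx
      obtain ⟨N, r, hr, hry⟩ := hy
      refine ⟨M + N, c ^ N • q + c ^ M • r,
        Q.add_mem (Submodule.smul_of_tower_mem _ _ hq) (Submodule.smul_of_tower_mem _ _ hr), ?_⟩
      simp only [Subalgebra.coe_add, SetLike.val_smul, hqx, hry, smul_smul, ← pow_add, smul_add,
        add_comm N M]
    | smul r x _ hx =>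
      obtain ⟨N, q, hq, hqx⟩ := hx
      obtain ⟨M, hM⟩ := hc r
      refine ⟨M + N, ⟨_, hM⟩ * q, Q.mul_mem_left _ hq, ?_⟩
      simp only [Subalgebra.coe_mul, hqx, smul_eq_mul, pow_add, mul_smul, smul_mul_smul_comm]
  intro htop
  obtain ⟨N, q, hq, hq1⟩ := hclear 1 (htop ▸ Submodule.mem_top)
  have hcN : algebraMap S T (c ^ N) ∈ Q := by
    convert hq
    ext
    simp [hq1, Algebra.smul_def]
  rw [← Ideal.mem_comap, hQP] at hcN
  exact hcP (Ideal.IsPrime.mem_of_pow_mem ‹_› N hcN)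

theorem IsTranscendenceBasis.exists_ne_zero_setOf_eval_ne_zero_subset_range {K σ ι : Type*}
    [Field K] [IsAlgClosed K] [Finite σ] {p : ι → MvPolynomial σ K}
    (hp : IsTranscendenceBasis K p) :
    ∃ D : MvPolynomial ι K, D ≠ 0 ∧
      {y | eval y D ≠ 0} ⊆ Set.range fun x : σ → K => fun j => eval x (p j) := by
  set S := Algebra.adjoin K (Set.range p)
  have := hp.isAlgebraic
  obtain ⟨c, hc0, hc⟩ := exists_ne_zero_forall_pow_smul_mem_integralClosure S
  refine ⟨hp.1.aevalEquiv.symm c, by simpa using hc0, ?_⟩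
  intro y hy
  let ev : S →ₐ[K] K := (aeval y).comp hp.1.aevalEquiv.symm.toAlgHom
  have := RingHom.ker_isPrime ev
  have hJ : (RingHom.ker ev).map (algebraMap S (MvPolynomial σ K)) ≠ ⊤ :=
    Ideal.map_ne_top_of_pow_smul_mem_integralClosure Subtype.val_injective hc
      (RingHom.mem_ker.not.mpr hy)
  obtain ⟨M, hM, hJM⟩ := Ideal.exists_le_maximal _ hJ
  obtain ⟨x, rfl⟩ := (isMaximal_iff_eq_vanishingIdeal_singleton).mp hM
  refine ⟨x, funext fun j => ?_⟩
  have hmem : hp.1.aevalEquiv (X j - C (y j)) ∈ RingHom.ker ev := by simp [ev]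
  have := hJM (Ideal.mem_map_of_mem _ hmem)
  rw [hp.1.algebraMap_aevalEquiv, mem_vanishingIdeal_singleton_iff] at this
  simpa [sub_eq_zero] using this

theorem AlgebraicIndependent.denseRange_eval {K σ : Type*} [NontriviallyNormedField K]
    [IsAlgClosed K] [Finite σ] {p : σ → MvPolynomial σ K} (hp : AlgebraicIndependent K p) :
    DenseRange fun x : σ → K => fun j => eval x (p j) := by
  have hbasis : IsTranscendenceBasis K p :=
    hp.isTranscendenceBasis_of_lift_trdeg_le_of_finite (by simp)
  obtain ⟨D, hD, hrange⟩ := hbasis.exists_ne_zero_setOf_eval_ne_zero_subset_range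
  exact (dense_setOf_eval_ne_zero hD).mono hrange

theorem powerSumMap_denseRange_general
    (n m : ℕ) (hmn : m ≤ n)
    (a : Fin m → ℕ) (ha : StrictMono a) (hapos : ∀ j, 0 < a j) :
    DenseRange (fun x : Fin n → ℂ => fun j : Fin m => ∑ i : Fin n, x i ^ a j) := by
  obtain ⟨k, rfl⟩ := Nat.exists_eq_add_of_le hmn
  refine (algebraicIndependent_sum_X_pow (R := ℂ) ha.injective hapos).denseRange_eval.mono ?_
  rintro _ ⟨x, rfl⟩
  refine ⟨Fin.append x 0, funext fun j => ?_⟩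
  simp [Fin.sum_univ_add, (hapos j).ne']

/-- The power sum map `φ : ℂ^n → ℂ^m`, with coordinates
`φ_j(x) = ∑_{i=1}^n x_i^{a_j}` for distinct positive exponents
`a_1 < … < a_m` and `m ≤ n`, is dominant: its image is dense in `ℂ^m`. -/
theorem powerSumMap_denseRange
    (n m : ℕ) (hn : 0 < n) (hm : 0 < m) (hmn : m ≤ n)
    (a : Fin m → ℕ) (ha : StrictMono a) (hapos : ∀ j, 0 < a j) :
    DenseRange (fun x : Fin n → ℂ => fun j : Fin m => ∑ i : Fin n, x i ^ a j) :=
  powerSumMap_denseRange_general n m hmn a ha hapos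
end

section
/- Let n and m be positive integers and let a_1 < a_2 < ... < a_m be distinct positive integers, at least one of which is even. Then the image of the real power sum map φ_ℝ : ℝ^n → ℝ^m, defined by φ_j(x) = Σ_{i=1}^n x_i^{a_j}, is a closed subset of ℝ^m. -/
/-- If at least one of the distinct positive exponents `a_1 < … < a_m` is even,
then the image of the real power sum map `φ_ℝ : ℝ^n → ℝ^m`,
`φ_j(x) = ∑_{i=1}^n x_i^{a_j}`, is closed in `ℝ^m`. -/
theorem powerSum_real_image_isClosed_of_even
    (n m : ℕ) (hn : 0 < n) (hm : 0 < m)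
    (a : Fin m → ℕ) (ha : StrictMono a) (hapos : ∀ j, 0 < a j)
    (heven : ∃ j, Even (a j)) :
    IsClosed (Set.range (fun x : Fin n → ℝ => fun j : Fin m => ∑ i : Fin n, x i ^ a j)) := by
  obtain ⟨j0, hj0⟩ := heven
  set f : (Fin n → ℝ) → (Fin m → ℝ) :=
    fun x => fun j => ∑ i : Fin n, x i ^ a j with hf
  have hcont : Continuous f := by
    apply continuous_pi
    intro j
    exact continuous_finset_sum _ fun i _ => (continuous_apply i).pow _
  -- key lower bound : ‖x‖ ^ a j0 ≤ ‖f x‖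
  have hbound : ∀ x : Fin n → ℝ, ‖x‖ ^ a j0 ≤ ‖f x‖ := by
    intro x
    haveI : Nonempty (Fin n) := ⟨⟨0, hn⟩⟩
    obtain ⟨i0, -, hi0⟩ := Finset.exists_max_image Finset.univ (fun i => |x i|)
      ⟨⟨0, hn⟩, Finset.mem_univ _⟩
    have hx : ‖x‖ ≤ |x i0| := by
      apply pi_norm_le_iff_of_nonneg (abs_nonneg _) |>.2
      intro i
      simpa using hi0 i (Finset.mem_univ i)
    have h1 : ‖x‖ ^ a j0 ≤ |x i0| ^ a j0 :=
      pow_le_pow_left₀ (norm_nonneg x) hx _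
    have h2 : |x i0| ^ a j0 = x i0 ^ a j0 := hj0.pow_abs _
    have h3 : x i0 ^ a j0 ≤ f x j0 := by
      apply Finset.single_le_sum (f := fun i => x i ^ a j0)
        (fun i _ => hj0.pow_nonneg _) (Finset.mem_univ i0)
    have h4 : f x j0 ≤ ‖f x‖ := (le_abs_self _).trans (norm_le_pi_norm (f x) j0)
    linarith
  have hnorm : Filter.Tendsto (fun x => ‖f x‖) (Bornology.cobounded (Fin n → ℝ)) Filter.atTop := by
    have h1 : Filter.Tendsto (fun x : Fin n → ℝ => ‖x‖ ^ a j0)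
        (Bornology.cobounded (Fin n → ℝ)) Filter.atTop :=
      (Filter.tendsto_pow_atTop (hapos j0).ne').comp tendsto_norm_cobounded_atTop
    exact Filter.tendsto_atTop_mono hbound h1
  have hproper : IsProperMap f := by
    rw [isProperMap_iff_tendsto_cocompact]
    refine ⟨hcont, ?_⟩
    rw [← Metric.cobounded_eq_cocompact (α := Fin n → ℝ),
      ← Metric.cobounded_eq_cocompact (α := Fin m → ℝ),
      ← comap_norm_atTop (E := Fin m → ℝ), Filter.tendsto_comap_iff]
    exact hnorm
  exact hproper.isClosed_range
end

section
/- Let n and m be positive integers and let a_1 < a_2 < ... < a_m be distinct positive integers. Then the image of the nonnegative orthant ℝ^n_{≥0} = { x ∈ ℝ^n : x_i ≥ 0 for all i } under the power sum map φ : ℝ^n → ℝ^m, defined by φ_j(x) = Σ_{i=1}^n x_i^{a_j}, is a closed subset of ℝ^m. -/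
/-- For distinct positive exponents `a_1 < … < a_m`, the image of the nonnegative
orthant `ℝ^n_{≥0}` under the power sum map `φ_j(x) = ∑_{i=1}^n x_i^{a_j}` is a
closed subset of `ℝ^m`. -/
theorem powerSum_nonneg_image_isClosed
    (n m : ℕ) (hn : 0 < n) (hm : 0 < m)
    (a : Fin m → ℕ) (ha : StrictMono a) (hapos : ∀ j, 0 < a j) :
    IsClosed ((fun x : Fin n → ℝ => fun j : Fin m => ∑ i : Fin n, x i ^ a j) ''
      {x : Fin n → ℝ | ∀ i, 0 ≤ x i}) := by
  set f : (Fin n → ℝ) → (Fin m → ℝ) := fun x j => ∑ i : Fin n, x i ^ a j with hf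
  have hcont : Continuous f := by
    apply continuous_pi
    intro j
    exact continuous_finset_sum _ fun i _ => (continuous_apply i).pow _
  apply IsSeqClosed.isClosed
  intro y p hy hyp
  choose x hx hfx using hy
  set j0 : Fin m := ⟨0, hm⟩ with hj0
  -- the j0 coordinate of y is bounded above
  have hyj0 : Filter.Tendsto (fun k => y k j0) Filter.atTop (nhds (p j0)) :=
    (tendsto_pi_nhds.mp hyp) j0
  obtain ⟨C, hC⟩ := hyj0.bddAbove_range
  have hC' : ∀ k, y k j0 ≤ C := fun k => hC ⟨k, rfl⟩
  set M : ℝ := max 1 C with hM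
  have hxM : ∀ k i, x k i ≤ M := by
    intro k i
    have hb : x k i ^ a j0 ≤ y k j0 := by
      rw [← hfx k]
      exact Finset.single_le_sum (fun i' _ => pow_nonneg (hx k i') _) (Finset.mem_univ i)
    by_cases h1 : x k i ≤ 1
    · exact h1.trans (le_max_left _ _)
    · push_neg at h1
      have : x k i ≤ x k i ^ a j0 := le_self_pow₀ h1.le (hapos j0).ne'
      exact (this.trans (hb.trans (hC' k))).trans (le_max_right _ _)
  -- all x k live in a compact set
  have hScomp : IsCompact (Set.pi Set.univ fun _ : Fin n => Set.Icc (0:ℝ) M) :=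
    isCompact_univ_pi fun _ => isCompact_Icc
  have hxin : ∀ k, x k ∈ Set.pi Set.univ fun _ : Fin n => Set.Icc (0:ℝ) M := by
    intro k i _
    exact ⟨hx k i, hxM k i⟩
  obtain ⟨z, hz, φ, hφ, hzt⟩ := hScomp.tendsto_subseq hxin
  refine ⟨z, fun i => (hz i (Set.mem_univ i)).1, ?_⟩
  have h1 : Filter.Tendsto (fun k => f (x (φ k))) Filter.atTop (nhds (f z)) :=
    (hcont.tendsto z).comp hzt
  have h2 : Filter.Tendsto (fun k => y (φ k)) Filter.atTop (nhds p) :=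
    hyp.comp (hφ.tendsto_atTop)
  have : (fun k => f (x (φ k))) = fun k => y (φ k) := by
    funext k; exact hfx (φ k)
  rw [this] at h1
  exact tendsto_nhds_unique h1 h2
end

section
/- Consider the power sum map φ : ℝ² → ℝ² with exponent set A = {1, 3}, i.e., φ(x_1, x_2) = (x_1 + x_2, x_1³ + x_2³). The point (0, 1) lies in the closure of the image of φ but does not lie in the image of φ; in particular, the image of φ is not a closed subset of ℝ². -/
open Filter Topology

lemma ps13_tendsto_inv (c : ℝ) (hc : 0 < c) (k : ℕ) (hk : k ≠ 0) :
    Tendsto (fun x : ℝ => 1 / (c * x ^ k)) atTop (𝓝 0) := by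
  apply Tendsto.div_atTop tendsto_const_nhds
  exact (tendsto_pow_atTop hk).const_mul_atTop hc

/-- For the power sum map `φ : ℝ² → ℝ²` with exponents `{1,3}`,
`φ(x₁,x₂) = (x₁ + x₂, x₁³ + x₂³)`, the point `(0,1)` lies in the closure of the
image but not in the image; in particular, the image is not closed in `ℝ²`. -/
theorem powerSum_image_not_closed_13 :
    ((0 : ℝ), (1 : ℝ)) ∈
      closure (Set.range (fun p : ℝ × ℝ => (p.1 + p.2, p.1 ^ 3 + p.2 ^ 3))) ∧
    ((0 : ℝ), (1 : ℝ)) ∉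
      Set.range (fun p : ℝ × ℝ => (p.1 + p.2, p.1 ^ 3 + p.2 ^ 3)) ∧
    ¬ IsClosed (Set.range (fun p : ℝ × ℝ => (p.1 + p.2, p.1 ^ 3 + p.2 ^ 3))) := by
  have hmem : ((0 : ℝ), (1 : ℝ)) ∈
      closure (Set.range (fun p : ℝ × ℝ => (p.1 + p.2, p.1 ^ 3 + p.2 ^ 3))) := by
    have h1 : Tendsto (fun x : ℝ => x + (1 / (3 * x ^ 2) - x)) atTop (𝓝 0) := by
      have : (fun x : ℝ => x + (1 / (3 * x ^ 2) - x)) = fun x => 1 / (3 * x ^ 2) := by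
        funext x; ring
      rw [this]
      exact ps13_tendsto_inv 3 (by norm_num) 2 (by norm_num)
    have h2 : Tendsto (fun x : ℝ => x ^ 3 + (1 / (3 * x ^ 2) - x) ^ 3) atTop (𝓝 1) := by
      have heq : ∀ᶠ x : ℝ in atTop,
          1 - 1 / (3 * x ^ 3) + 1 / (27 * x ^ 6)
            = x ^ 3 + (1 / (3 * x ^ 2) - x) ^ 3 := by
        filter_upwards [eventually_gt_atTop (0 : ℝ)] with x hx
        have hx0 : x ≠ 0 := ne_of_gt hx
        field_simp
        ring
      have : Tendsto (fun x : ℝ => 1 - 1 / (3 * x ^ 3) + 1 / (27 * x ^ 6)) atTop (𝓝 1) := by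
        have h := ((tendsto_const_nhds (x := (1:ℝ)) (f := atTop)).sub
          (ps13_tendsto_inv 3 (by norm_num) 3 (by norm_num))).add
          (ps13_tendsto_inv 27 (by norm_num) 6 (by norm_num))
        simpa using h
      exact Tendsto.congr' heq this
    refine mem_closure_of_tendsto (f := fun x : ℝ =>
        (fun p : ℝ × ℝ => (p.1 + p.2, p.1 ^ 3 + p.2 ^ 3)) (x, 1 / (3 * x ^ 2) - x))
      (b := atTop) ?_ (Eventually.of_forall fun x => Set.mem_range_self (x, 1 / (3 * x ^ 2) - x))
    exact h1.prodMk_nhds h2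
  have hnot : ((0 : ℝ), (1 : ℝ)) ∉
      Set.range (fun p : ℝ × ℝ => (p.1 + p.2, p.1 ^ 3 + p.2 ^ 3)) := by
    rintro ⟨⟨a, b⟩, h⟩
    simp only [Prod.mk.injEq] at h
    obtain ⟨h1, h2⟩ := h
    nlinarith [h1, h2, sq_nonneg (a - b), sq_nonneg (a + b)]
  refine ⟨hmem, hnot, fun hcl => hnot ?_⟩
  exact hcl.closure_subset hmem
end

section
/- Consider the power sum map φ : ℝ² → ℝ² with exponent set A = {1, 3}, i.e., φ(x_1, x_2) = (x_1 + x_2, x_1³ + x_2³). Its image equals the set {(0, 0)} ∪ { (c_1, c_2) ∈ ℝ² : (c_1 < 0 and c_1³ ≥ 4c_2) or (c_1 > 0 and c_1³ ≤ 4c_2) }. -/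
lemma powerSum_aux (s p : ℝ) (hs : s ≠ 0) (hnn : 0 ≤ (4 * p - s ^ 3) / (3 * s)) :
    ∃ x y : ℝ, x + y = s ∧ x ^ 3 + y ^ 3 = p := by
  set t := Real.sqrt ((4 * p - s ^ 3) / (3 * s)) with htdef
  have ht : t ^ 2 = (4 * p - s ^ 3) / (3 * s) := Real.sq_sqrt hnn
  have h3 : (3 : ℝ) * s ≠ 0 := mul_ne_zero three_ne_zero hs
  have ht' : t ^ 2 * (3 * s) = 4 * p - s ^ 3 := by
    field_simp at ht; linarith [ht]
  exact ⟨(s + t) / 2, (s - t) / 2, by ring, by linear_combination ht' / 4⟩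

/-- The image of the real power sum map `φ(x₁,x₂) = (x₁ + x₂, x₁³ + x₂³)` equals
`{(0,0)} ∪ {(c₁,c₂) ∈ ℝ² : (c₁ < 0 ∧ c₁³ ≥ 4c₂) ∨ (c₁ > 0 ∧ c₁³ ≤ 4c₂)}`. -/
theorem powerSum_image_13 :
    Set.range (fun p : ℝ × ℝ => (p.1 + p.2, p.1 ^ 3 + p.2 ^ 3)) =
      {((0 : ℝ), (0 : ℝ))} ∪
      {c : ℝ × ℝ | (c.1 < 0 ∧ c.1 ^ 3 ≥ 4 * c.2) ∨ (c.1 > 0 ∧ c.1 ^ 3 ≤ 4 * c.2)} := by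
  ext c
  simp only [Set.mem_range, Set.mem_union, Set.mem_singleton_iff, Set.mem_setOf_eq]
  constructor
  · rintro ⟨⟨x, y⟩, rfl⟩
    rcases lt_trichotomy (x + y) 0 with h | h | h
    · exact Or.inr (Or.inl ⟨h, by dsimp only; nlinarith [mul_nonneg (sq_nonneg (x - y)) (neg_nonneg.2 h.le)]⟩)
    · left
      have hy : y = -x := by linarith
      subst hy
      simp only [Prod.mk.injEq]
      constructor <;> ring
    · exact Or.inr (Or.inr ⟨h, by dsimp only; nlinarith [mul_nonneg (sq_nonneg (x - y)) h.le]⟩)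
  · rintro (h | ⟨h1, h2⟩ | ⟨h1, h2⟩)
    · exact ⟨(0, 0), by simp [h]⟩
    · have hnn : 0 ≤ (4 * c.2 - c.1 ^ 3) / (3 * c.1) := by
        rw [div_nonneg_iff]; right; constructor <;> nlinarith
      obtain ⟨x, y, hxy, hp⟩ := powerSum_aux c.1 c.2 (ne_of_lt h1) hnn
      exact ⟨(x, y), by simp [hxy, hp]⟩
    · have hnn : 0 ≤ (4 * c.2 - c.1 ^ 3) / (3 * c.1) := by
        rw [div_nonneg_iff]; left; constructor <;> nlinarith
      obtain ⟨x, y, hxy, hp⟩ := powerSum_aux c.1 c.2 (ne_of_gt h1) hnn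
      exact ⟨(x, y), by simp [hxy, hp]⟩
end

section
/- Let n ≥ 2 be an integer and let a_1 < a_2 be positive integers. A point (c_1, c_2) ∈ ℝ² lies in the image of the nonnegative orthant ℝ^n_{≥0} under the power sum map x ↦ (Σ_{i=1}^n x_i^{a_1}, Σ_{i=1}^n x_i^{a_2}) if and only if c_1 ≥ 0, c_2 ≥ 0, and c_2^{a_1} ≤ c_1^{a_2} ≤ n^{a_2 − a_1} · c_2^{a_1}. -/
/-!
Substituting `y i = x i ^ a₁` turns the question into which values `∑ y i ^ r`, with
`r = a₂ / a₁ ≥ 1`, takes on the simplex `{y ≥ 0, ∑ y i = c₁}`. Since `y i ^ r ≤ y i * c₁ ^ (r - 1)`,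
the maximum `c₁ ^ r` is attained at a vertex; by the power mean inequality the minimum
`n ^ (1 - r) * c₁ ^ r` is attained at the barycentre; and on the segment joining the two every
intermediate value is attained, by the intermediate value theorem.
-/

open Finset Real

theorem Real.sum_rpow_le_rpow_sum_of_nonneg {ι : Type*} {s : Finset ι} {f : ι → ℝ} {p : ℝ}
    (hp : 1 ≤ p) (hf : ∀ i ∈ s, 0 ≤ f i) : ∑ i ∈ s, f i ^ p ≤ (∑ i ∈ s, f i) ^ p := by
  have hsplit : ∀ x : ℝ, 0 ≤ x → x ^ p = x * x ^ (p - 1) := fun x hx => by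
    rw [← rpow_one_add' hx (by linarith), add_sub_cancel]
  calc ∑ i ∈ s, f i ^ p = ∑ i ∈ s, f i * f i ^ (p - 1) :=
        sum_congr rfl fun i hi => hsplit _ (hf i hi)
    _ ≤ ∑ i ∈ s, f i * (∑ j ∈ s, f j) ^ (p - 1) :=
        sum_le_sum fun i hi => mul_le_mul_of_nonneg_left
          (rpow_le_rpow (hf i hi) (single_le_sum hf hi) (sub_nonneg.2 hp)) (hf i hi)
    _ = (∑ i ∈ s, f i) ^ p := by rw [← sum_mul, hsplit _ (sum_nonneg hf)]

section SumRpow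

variable {ι : Type*} [Fintype ι] {r : ℝ}

theorem exists_sum_eq_sum_rpow_eq_of_le [Nonempty ι] (hr : 1 ≤ r) {c d : ℝ} (hc : 0 ≤ c)
    (hlo : c ^ r ≤ (Fintype.card ι : ℝ) ^ (r - 1) * d) (hhi : d ≤ c ^ r) :
    ∃ y : ι → ℝ, (∀ i, 0 ≤ y i) ∧ ∑ i, y i = c ∧ ∑ i, y i ^ r = d := by
  classical
  obtain ⟨i₀⟩ := ‹Nonempty ι›
  have hN : (0 : ℝ) < Fintype.card ι := by positivity
  let y : ℝ → ι → ℝ := fun t i => (1 - t) * (Pi.single i₀ c : ι → ℝ) i + t * (c / Fintype.card ι)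
  have hy_nonneg : ∀ t ∈ Set.Icc (0 : ℝ) 1, ∀ i, 0 ≤ y t i := by
    rintro t ⟨ht₀, ht₁⟩ i
    have : 0 ≤ (Pi.single i₀ c : ι → ℝ) i := by
      by_cases h : i = i₀ <;> simp [h, hc]
    have : 0 ≤ 1 - t := by linarith
    positivity
  have hy_sum : ∀ t, ∑ i, y t i = c := fun t => by
    simp only [y, sum_add_distrib, ← mul_sum, sum_pi_single', mem_univ, if_true,
      sum_const, card_univ, nsmul_eq_mul]
    field_simp
    ring
  have hy_cont : Continuous fun t => ∑ i, y t i ^ r := by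
    refine continuous_finsetSum _ fun i _ => ?_
    exact (by fun_prop : Continuous fun t => y t i).rpow_const fun _ => Or.inr (by linarith)
  have hy₀ : ∑ i, y 0 i ^ r = c ^ r := by
    rw [Fintype.sum_eq_single i₀ fun i hi => by simp [y, hi, zero_rpow (by linarith : r ≠ 0)]]
    simp [y]
  have hy₁ : ∑ i, y 1 i ^ r = c ^ r / (Fintype.card ι : ℝ) ^ (r - 1) := by
    simp only [y, sub_self, zero_mul, zero_add, one_mul, sum_const, card_univ, nsmul_eq_mul]
    rw [div_rpow hc hN.le, rpow_sub_one hN.ne']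
    field_simp
  obtain ⟨t, ht, hyt⟩ := intermediate_value_Icc' zero_le_one hy_cont.continuousOn
    ⟨by rwa [hy₁, div_le_iff₀' (by positivity)], by rwa [hy₀]⟩
  exact ⟨y t, hy_nonneg t ht, hy_sum t, hyt⟩

theorem exists_sum_eq_sum_rpow_eq_iff [Nonempty ι] (hr : 1 ≤ r) {c d : ℝ} :
    (∃ y : ι → ℝ, (∀ i, 0 ≤ y i) ∧ ∑ i, y i = c ∧ ∑ i, y i ^ r = d) ↔
      0 ≤ c ∧ 0 ≤ d ∧ d ≤ c ^ r ∧ c ^ r ≤ (Fintype.card ι : ℝ) ^ (r - 1) * d := by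
  constructor
  · rintro ⟨y, hy, rfl, rfl⟩
    have hy' : ∀ i ∈ univ, 0 ≤ y i := fun i _ => hy i
    refine ⟨sum_nonneg hy', sum_nonneg fun i _ => rpow_nonneg (hy i) r,
      sum_rpow_le_rpow_sum_of_nonneg hr hy', ?_⟩
    simpa using rpow_sum_le_const_mul_sum_rpow_of_nonneg univ hr hy'
  · rintro ⟨hc, -, hhi, hlo⟩
    exact exists_sum_eq_sum_rpow_eq_of_le hr hc hlo hhi

end SumRpow

theorem Real.rpow_natCast_div_pow {u : ℝ} (hu : 0 ≤ u) {a : ℕ} (ha : a ≠ 0) (b : ℕ) :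
    (u ^ ((b : ℝ) / a)) ^ a = u ^ b := by
  rw [← rpow_mul_natCast hu, div_mul_cancel₀ _ (Nat.cast_ne_zero.2 ha), rpow_natCast]

theorem exists_sum_pow_eq_iff_exists_sum_rpow_eq {ι : Type*} [Fintype ι] {a : ℕ} (ha : a ≠ 0)
    (b : ℕ) (c d : ℝ) :
    (∃ x : ι → ℝ, (∀ i, 0 ≤ x i) ∧ ∑ i, x i ^ a = c ∧ ∑ i, x i ^ b = d) ↔
      ∃ y : ι → ℝ, (∀ i, 0 ≤ y i) ∧ ∑ i, y i = c ∧ ∑ i, y i ^ ((b : ℝ) / a) = d := by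
  constructor
  · rintro ⟨x, hx, rfl, rfl⟩
    refine ⟨fun i => x i ^ a, fun i => pow_nonneg (hx i) a, rfl, sum_congr rfl fun i _ => ?_⟩
    rw [← rpow_natCast_mul (hx i), mul_div_cancel₀ _ (Nat.cast_ne_zero.2 ha), rpow_natCast]
  · rintro ⟨y, hy, rfl, rfl⟩
    refine ⟨fun i => y i ^ (a : ℝ)⁻¹, fun i => rpow_nonneg (hy i) _,
      sum_congr rfl fun i _ => rpow_inv_natCast_pow (hy i) ha, sum_congr rfl fun i _ => ?_⟩
    rw [← rpow_natCast, ← rpow_mul (hy i), inv_mul_eq_div]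

/-- For `n ≥ 2` and positive exponents `a₁ < a₂`, a point `(c₁,c₂) ∈ ℝ²` lies in
the image of the nonnegative orthant `ℝ^n_{≥0}` under
`x ↦ (∑_i x_i^{a₁}, ∑_i x_i^{a₂})` if and only if `c₁ ≥ 0`, `c₂ ≥ 0` and
`c₂^{a₁} ≤ c₁^{a₂} ≤ n^{a₂−a₁} c₂^{a₁}`. -/
theorem powerSum_nonneg_image_two_norms
    (n : ℕ) (hn : 2 ≤ n) (a₁ a₂ : ℕ) (h₀ : 0 < a₁) (h₁₂ : a₁ < a₂)
    (c₁ c₂ : ℝ) :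
    (∃ x : Fin n → ℝ, (∀ i, 0 ≤ x i) ∧
        (∑ i : Fin n, x i ^ a₁) = c₁ ∧ (∑ i : Fin n, x i ^ a₂) = c₂) ↔
      (0 ≤ c₁ ∧ 0 ≤ c₂ ∧ c₂ ^ a₁ ≤ c₁ ^ a₂ ∧
        c₁ ^ a₂ ≤ (n : ℝ) ^ (a₂ - a₁) * c₂ ^ a₁) := by
  have : Nonempty (Fin n) := ⟨⟨0, by omega⟩⟩
  have ha₁ : a₁ ≠ 0 := h₀.ne'
  have hr : 1 ≤ (a₂ : ℝ) / a₁ := by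
    rw [one_le_div₀ (by positivity)]
    exact_mod_cast h₁₂.le
  have hr₁ : (a₂ : ℝ) / a₁ - 1 = ((a₂ - a₁ : ℕ) : ℝ) / a₁ := by
    rw [Nat.cast_sub h₁₂.le]
    field_simp
  rw [exists_sum_pow_eq_iff_exists_sum_rpow_eq ha₁, exists_sum_eq_sum_rpow_eq_iff hr,
    Fintype.card_fin, hr₁]
  refine and_congr_right fun hc₁ => and_congr_right fun hc₂ => and_congr ?_ ?_
  · rw [← pow_le_pow_iff_left₀ hc₂ (rpow_nonneg hc₁ _) ha₁, rpow_natCast_div_pow hc₁ ha₁]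
  · rw [← pow_le_pow_iff_left₀ (rpow_nonneg hc₁ _) (by positivity) ha₁, mul_pow,
      rpow_natCast_div_pow hc₁ ha₁, rpow_natCast_div_pow (Nat.cast_nonneg n) ha₁]
end

section
/- Let m ≤ n be positive integers and let a_1 < a_2 < ... < a_m be distinct positive integers. For every x ∈ ℝ^n with nonnegative coordinates, there exist a vector y ∈ ℝ^n with nonnegative coordinates whose nonzero coordinates take at most m distinct values (i.e., the set { y_i : y_i ≠ 0 } has cardinality at most m), and a real number t > 0, such that Σ_{i=1}^n y_i^{a_j} = t^{a_j} · Σ_{i=1}^n x_i^{a_j} for all j = 1, ..., m. (Equivalently, the image of the normalized norm map ψ_A into the probability simplex Δ_{m−1} is the union of the curvy (m−1)-simplices B_ν over ν ∈ C([n], m).) -/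
/-! Take `t = 1` and substitute `y = u²`, which removes the sign constraints. Minimize
`∑ uᵢ^(2N)`, with `N` distinct from every `a_j`, over the compact set of `u` with
`∑ uᵢ^(2 a_j) = ∑ xᵢ^(a_j)` for all `j`. At a minimizer, Lagrange multipliers give a nonzero
`P(v) = ∑ⱼ λⱼ v^(a_j) + λ₀ v^N` vanishing at every value `uᵢ²`. By Descartes' rule of signs a
nonzero polynomial with `m + 1` terms has at most `m` positive roots. -/

open Finset Function Set

namespace Polynomial

variable {R : Type*}

theorem signVariations_le_card_support_sub_one [Semiring R] [LinearOrder R] (P : R[X]) :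
    P.signVariations ≤ #P.support - 1 := by
  induction hc : #P.support generalizing P with
  | zero => simp [card_support_eq_zero.mp hc]
  | succ c ih =>
    by_cases hP : P.eraseLead = 0
    · rw [← eraseLead_add_monomial_natDegree_leadingCoeff P, hP, zero_add,
        signVariations_monomial]
      exact Nat.zero_le _
    · have hc' : #P.eraseLead.support = c := card_support_eraseLead' hc
      have : 0 < c := hc' ▸ card_pos.mpr (nonempty_support_iff.mpr hP)
      calc P.signVariations ≤ P.eraseLead.signVariations + 1 := signVariations_le_eraseLead_succ P
        _ ≤ c - 1 + 1 := by gcongr; exact ih _ hc'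
        _ = c + 1 - 1 := by omega

variable [CommRing R] [LinearOrder R] [IsStrictOrderedRing R]

theorem card_pos_roots_lt_card_support {P : R[X]} (hP : P ≠ 0) :
    #(P.roots.toFinset.filter (0 < ·)) < #P.support := by
  calc #(P.roots.toFinset.filter (0 < ·)) ≤ P.roots.countP (0 < ·) := by
        rw [← Multiset.toFinset_filter, Multiset.countP_eq_card_filter]
        exact Multiset.toFinset_card_le _
    _ ≤ P.signVariations := roots_countP_pos_le_signVariations P
    _ ≤ #P.support - 1 := signVariations_le_card_support_sub_one P
    _ < #P.support := Nat.sub_one_lt (card_ne_zero.mpr (nonempty_support_iff.mpr hP))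

end Polynomial

open Polynomial in
theorem card_pos_roots_sum_pow_lt {R κ : Type*} [CommRing R] [LinearOrder R] [IsStrictOrderedRing R]
    [Fintype κ] {e : κ → ℕ} (he : Injective e) {c : κ → R} (hc : c ≠ 0) {s : Finset R}
    (hs : ∀ v ∈ s, 0 < v ∧ ∑ k, c k * v ^ e k = 0) : #s < Fintype.card κ := by
  classical
  set P : R[X] := ∑ k, monomial (e k) (c k)
  have hcoeff (k : κ) : P.coeff (e k) = c k := by
    simp [P, coeff_monomial, he.eq_iff]
  have hP : P ≠ 0 := fun h => hc (funext fun k => by simpa [h] using (hcoeff k).symm)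
  have hsupp : P.support ⊆ univ.image e := by
    intro d hd
    by_contra hd'
    simp only [Finset.mem_image, Finset.mem_univ, true_and, not_exists] at hd'
    exact mem_support_iff.mp hd (by simp [P, coeff_monomial, hd'])
  have hroots : s ⊆ P.roots.toFinset.filter (0 < ·) := by
    intro v hv
    simp [P, eval_finsetSum, hP, (hs v hv).1, (hs v hv).2]
  calc #s ≤ #(P.roots.toFinset.filter (0 < ·)) := card_le_card hroots
    _ < #P.support := card_pos_roots_lt_card_support hP
    _ ≤ #(univ.image e) := card_le_card hsupp
    _ ≤ Fintype.card κ := card_image_le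

section

variable {ι : Type*} [Fintype ι]

theorem hasStrictFDerivAt_sum_pow (e : ℕ) (u : ι → ℝ) :
    HasStrictFDerivAt (fun v : ι → ℝ => ∑ i, v i ^ e)
      (∑ i, (e * u i ^ (e - 1)) • ContinuousLinearMap.proj (R := ℝ) (φ := fun _ : ι => ℝ) i) u :=
  .fun_sum fun i _ => (hasStrictDerivAt_pow e (u i)).comp_hasStrictFDerivAt u
    (hasStrictFDerivAt_apply i u)

theorem sum_smul_proj_apply_single [DecidableEq ι] (e : ℕ) (u : ι → ℝ) (i : ι) :
    (∑ i', (e * u i' ^ (e - 1)) • ContinuousLinearMap.proj (R := ℝ) (φ := fun _ : ι => ℝ) i')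
      (Pi.single i (u i)) = e * u i ^ e := by
  rcases e with _ | e
  · simp
  · simp [Pi.single_apply, pow_succ, mul_assoc]

theorem IsLocalExtrOn.exists_multipliers_sum_pow {κ : Type*} [Fintype κ] {e : κ → ℕ} {d : ℕ}
    {u : ι → ℝ}
    (h : IsLocalExtrOn (fun v : ι → ℝ => ∑ i, v i ^ d)
      {v | ∀ k, ∑ i, v i ^ e k = ∑ i, u i ^ e k} u) :
    ∃ (Λ : κ → ℝ) (Λ₀ : ℝ), (Λ, Λ₀) ≠ 0 ∧
      ∀ i, ∑ k, Λ k * e k * u i ^ e k + Λ₀ * d * u i ^ d = 0 := by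
  classical
  obtain ⟨Λ, Λ₀, hne, hΛ⟩ := h.exists_multipliers_of_hasStrictFDerivAt
    (fun k => hasStrictFDerivAt_sum_pow (e k) u) (hasStrictFDerivAt_sum_pow d u)
  refine ⟨Λ, Λ₀, hne, fun i => ?_⟩
  have := congr($hΛ (Pi.single i (u i)))
  rw [_root_.add_apply, _root_.sum_apply] at this
  simpa only [_root_.smul_apply, sum_smul_proj_apply_single, smul_eq_mul, mul_assoc,
    _root_.zero_apply] using this

theorem isCompact_setOf_sum_pow_two_mul_le {e : ℕ} (he : 0 < e) (c : ℝ) :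
    IsCompact {v : ι → ℝ | ∑ i, v i ^ (2 * e) ≤ c} := by
  refine Metric.isCompact_of_isClosed_isBounded (isClosed_le (by fun_prop) continuous_const) ?_
  refine (Metric.isBounded_iff_subset_closedBall 0).mpr ⟨max 1 c, fun v hv => ?_⟩
  rw [mem_closedBall_zero_iff, pi_norm_le_iff_of_nonneg (by positivity)]
  intro i
  rw [Real.norm_eq_abs]
  rcases le_or_gt |v i| 1 with h | h
  · exact h.trans (le_max_left _ _)
  · calc |v i| ≤ |v i| ^ (2 * e) := le_self_pow₀ h.le (by omega)
      _ = v i ^ (2 * e) := (even_two_mul e).pow_abs _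
      _ ≤ ∑ i, v i ^ (2 * e) :=
        single_le_sum (fun j _ => (even_two_mul e).pow_nonneg (v j)) (mem_univ i)
      _ ≤ max 1 c := hv.trans (le_max_right _ _)

end

theorem ncard_range_sq_diff_zero_le_of_isLocalExtrOn {ι κ : Type*} [Fintype ι] [Fintype κ]
    {e : κ → ℕ} (he : Injective e) (he0 : ∀ k, 0 < e k) {d : ℕ} (hd : 0 < d) (hde : ∀ k, e k ≠ d)
    {u : ι → ℝ}
    (hu : IsLocalExtrOn (fun v : ι → ℝ => ∑ i, v i ^ (2 * d))
      {v | ∀ k, ∑ i, v i ^ (2 * e k) = ∑ i, u i ^ (2 * e k)} u) :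
    (range (fun i => u i ^ 2) \ {0}).ncard ≤ Fintype.card κ := by
  classical
  obtain ⟨Λ, Λ₀, hne, hcrit⟩ := hu.exists_multipliers_sum_pow
  let E : Option κ → ℕ := fun k => k.elim d e
  let c : Option κ → ℝ := fun k => k.elim (Λ₀ * (2 * d : ℕ)) fun k => Λ k * (2 * e k : ℕ)
  have hE : Injective E := by
    rintro (_ | k) (_ | k') h
    · rfl
    · exact absurd h.symm (hde k')
    · exact absurd h (hde k)
    · exact congrArg some (he h)
  have hc : c ≠ 0 := by
    refine fun h => hne ?_
    have h0 := congrFun h none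
    have hk := fun k => congrFun h (some k)
    simp only [c, Option.elim, Pi.zero_apply, mul_eq_zero, Nat.cast_eq_zero] at h0 hk
    ext k
    · exact (hk k).resolve_right (by have := he0 k; omega)
    · exact h0.resolve_right (by omega)
  have hfin : (range (fun i => u i ^ 2) \ {0}).Finite := (finite_range _).sdiff
  rw [ncard_eq_toFinset_card _ hfin, ← Nat.lt_add_one_iff, ← Fintype.card_option]
  refine card_pos_roots_sum_pow_lt hE hc fun v hv => ?_
  obtain ⟨⟨i, rfl⟩, hv0⟩ := by simpa using hv
  refine ⟨lt_of_le_of_ne (sq_nonneg _) (Ne.symm hv0), ?_⟩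
  simpa [Fintype.sum_option, c, E, ← pow_mul, add_comm, mul_assoc] using hcrit i

theorem powerSum_norm_map_image_curvy_simplices_general
    (n m : ℕ) (hm : 0 < m)
    (a : Fin m → ℕ) (ha : StrictMono a) (hapos : ∀ j, 0 < a j)
    (x : Fin n → ℝ) (hx : ∀ i, 0 ≤ x i) :
    ∃ (y : Fin n → ℝ) (t : ℝ), (∀ i, 0 ≤ y i) ∧ 0 < t ∧
      (Set.range y \ {0}).ncard ≤ m ∧
      ∀ j : Fin m, ∑ i : Fin n, y i ^ a j = t ^ a j * ∑ i : Fin n, x i ^ a j := by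
  set N := ∑ j, a j + 1
  have haN (j : Fin m) : a j ≠ N := (Nat.lt_succ_of_le (single_le_sum (by simp) (mem_univ j))).ne
  set u₀ : Fin n → ℝ := fun i => √(x i)
  have hu₀ (e : ℕ) : ∑ i, u₀ i ^ (2 * e) = ∑ i, x i ^ e := by
    simp [u₀, pow_mul, Real.sq_sqrt (hx _)]
  set Z := {v : Fin n → ℝ | ∀ j, ∑ i, v i ^ (2 * a j) = ∑ i, u₀ i ^ (2 * a j)}
  have hZclosed : IsClosed Z := by
    simp only [Z, ofPred_forall]
    exact isClosed_iInter fun j => isClosed_eq (by fun_prop) continuous_const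
  have hZ : IsCompact Z := (isCompact_setOf_sum_pow_two_mul_le (hapos ⟨0, hm⟩) _).of_isClosed_subset
    hZclosed fun v hv => (hv _).le
  obtain ⟨u, huZ, hmin⟩ := hZ.exists_isMinOn ⟨u₀, fun _ => rfl⟩
    (by fun_prop : Continuous fun v : Fin n → ℝ => ∑ i, v i ^ (2 * N)).continuousOn
  have hZu : Z = {v | ∀ j, ∑ i, v i ^ (2 * a j) = ∑ i, u i ^ (2 * a j)} := by
    simp only [Z, huZ _]
  refine ⟨fun i => u i ^ 2, 1, fun i => sq_nonneg _, one_pos, ?_, fun j => ?_⟩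
  · simpa using ncard_range_sq_diff_zero_le_of_isLocalExtrOn ha.injective hapos (by omega) haN
      (hZu ▸ hmin.localize.isExtr)
  · simp [← pow_mul, huZ j, hu₀]

/-- For `m ≤ n` and distinct positive exponents `a_1 < … < a_m`: every nonnegative
vector `x ∈ ℝ^n` matches, up to a common positive scaling `t` of the norms, a
nonnegative vector `y` whose nonzero coordinates take at most `m` distinct values,
i.e. `∑_i y_i^{a_j} = t^{a_j} ∑_i x_i^{a_j}` for all `j`. (The image of the
normalized norm map `ψ_A` in the simplex `Δ_{m−1}` is the union of the curvy
`(m−1)`-simplices `B_ν`, `ν ∈ C([n],m)`.) -/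
theorem powerSum_norm_map_image_curvy_simplices
    (n m : ℕ) (hn : 0 < n) (hm : 0 < m) (hmn : m ≤ n)
    (a : Fin m → ℕ) (ha : StrictMono a) (hapos : ∀ j, 0 < a j)
    (x : Fin n → ℝ) (hx : ∀ i, 0 ≤ x i) :
    ∃ (y : Fin n → ℝ) (t : ℝ), (∀ i, 0 ≤ y i) ∧ 0 < t ∧
      (Set.range y \ {0}).ncard ≤ m ∧
      ∀ j : Fin m, ∑ i : Fin n, y i ^ a j = t ^ a j * ∑ i : Fin n, x i ^ a j :=
  powerSum_norm_map_image_curvy_simplices_general n m hm a ha hapos x hx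
end

section
/- In the polynomial ring ℂ[x_1, x_2, x_3], let I be the ideal generated by the three power sums x_1³ + x_2³ + x_3³, x_1⁵ + x_2⁵ + x_3⁵, and x_1⁷ + x_2⁷ + x_3⁷. Then the radical of I equals the intersection of ideals ⟨x_1 + x_2, x_3⟩ ∩ ⟨x_1 + x_3, x_2⟩ ∩ ⟨x_2 + x_3, x_1⟩. -/
/-!
By the Nullstellensatz the radical is the vanishing ideal of the common zero set of
`p₃, p₅, p₇`. Newton's identities force `x₁ x₂ x₃ = 0` at a common zero, and for the two remaining
coordinates `a³ + b³ = a⁵ + b⁵ = 0` forces `a + b = 0`; so the zero set is the union of three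
lines. Each `⟨xᵢ + xⱼ, xₖ⟩` is prime, being the kernel of `xᵢ ↦ t, xⱼ ↦ -t, xₖ ↦ 0` into `ℂ[t]`,
so it is the vanishing ideal of its line, and the vanishing ideal of a union is the intersection.
-/

open MvPolynomial

section PowerSums

variable {R : Type*} [CommRing R] [IsDomain R]

theorem add_eq_zero_of_pow_three_of_pow_five {a b : R} (h₃ : a ^ 3 + b ^ 3 = 0)
    (h₅ : a ^ 5 + b ^ 5 = 0) : a + b = 0 := by
  by_cases hb : b = 0
  · subst hb
    have ha : a = 0 := pow_eq_zero_iff three_ne_zero |>.mp (by linear_combination h₃)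
    simp [ha]
  have hb₃ : b ^ 3 ≠ 0 := pow_ne_zero 3 hb
  have hsq : b ^ 2 = a ^ 2 := by
    have : b ^ 3 * (b ^ 2 - a ^ 2) = 0 := by linear_combination h₅ - a ^ 2 * h₃
    linear_combination (mul_eq_zero.mp this).resolve_left hb₃
  have : b ^ 2 * (a + b) = 0 := by linear_combination h₃ + a * hsq
  exact (mul_eq_zero.mp this).resolve_left (pow_ne_zero 2 hb)

theorem mul_mul_eq_zero_of_pow_three_five_seven [NeZero (3 : R)] {a b c : R}
    (h₃ : a ^ 3 + b ^ 3 + c ^ 3 = 0) (h₅ : a ^ 5 + b ^ 5 + c ^ 5 = 0)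
    (h₇ : a ^ 7 + b ^ 7 + c ^ 7 = 0) : a * b * c = 0 := by
  set e₁ := a + b + c
  set e₂ := a * b + a * c + b * c
  -- each `linear_combination` below is a Newton identity between power sums and `e₁, e₂, a * b * c`
  have hB : (a * b * c - e₁ * e₂) * (a ^ 4 + b ^ 4 + c ^ 4) = 0 := by
    linear_combination h₇ - (e₁ ^ 2 - e₂) * h₅ - e₁ * (a * b * c) * h₃
  rcases mul_eq_zero.mp hB with h | hp₄
  · have he₁ : e₁ = 0 := pow_eq_zero_iff three_ne_zero |>.mp (by linear_combination h₃ - 3 * h)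
    linear_combination h + e₂ * he₁
  have hp₂ : a * b * c * (a ^ 2 + b ^ 2 + c ^ 2) = 0 := by
    linear_combination h₅ + e₂ * h₃ - e₁ * hp₄
  rcases mul_eq_zero.mp hp₂ with h | hp₂
  · exact h
  have he₁ : a * b * c * e₁ = 0 := by linear_combination hp₄ + e₂ * hp₂ - e₁ * h₃
  rcases mul_eq_zero.mp he₁ with h | he₁
  · exact h
  have : (3 : R) * (a * b * c) = 0 := by linear_combination h₃ - e₁ ^ 2 * he₁ + 3 * e₂ * he₁
  exact (mul_eq_zero.mp this).resolve_left three_ne_zero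

theorem pow_three_five_seven_eq_zero_iff [NeZero (3 : R)] {a b c : R} :
    (a ^ 3 + b ^ 3 + c ^ 3 = 0 ∧ a ^ 5 + b ^ 5 + c ^ 5 = 0 ∧ a ^ 7 + b ^ 7 + c ^ 7 = 0) ↔
      (a + b = 0 ∧ c = 0) ∨ (a + c = 0 ∧ b = 0) ∨ (b + c = 0 ∧ a = 0) := by
  constructor
  · rintro ⟨h₃, h₅, h₇⟩
    rcases mul_eq_zero.mp (mul_mul_eq_zero_of_pow_three_five_seven h₃ h₅ h₇) with hab | hc
    · rcases mul_eq_zero.mp hab with ha | hb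
      · subst ha
        exact .inr <| .inr ⟨add_eq_zero_of_pow_three_of_pow_five (by simpa using h₃)
          (by simpa using h₅), rfl⟩
      · subst hb
        exact .inr <| .inl ⟨add_eq_zero_of_pow_three_of_pow_five (by simpa using h₃)
          (by simpa using h₅), rfl⟩
    · subst hc
      exact .inl ⟨add_eq_zero_of_pow_three_of_pow_five (by simpa using h₃)
        (by simpa using h₅), rfl⟩
  · rintro (⟨h, rfl⟩ | ⟨h, rfl⟩ | ⟨h, rfl⟩) <;> rw [← neg_eq_of_add_eq_zero_right h] <;>
      refine ⟨?_, ?_, ?_⟩ <;> ring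

end PowerSums

namespace MvPolynomial

theorem vanishingIdeal_union {k K σ : Type*} [Field k] [Field K] [Algebra k K]
    (A B : Set (σ → K)) :
    vanishingIdeal k (A ∪ B) = vanishingIdeal k A ⊓ vanishingIdeal k B := by
  ext p
  simp only [Submodule.mem_inf, mem_vanishingIdeal_iff, Set.mem_union, or_imp, forall_and]

theorem ker_aeval_le_of_forall_X_sub_mem {R σ : Type*} [CommRing R] (g : σ → Polynomial R)
    (i : σ) (J : Ideal (MvPolynomial σ R))
    (h : ∀ m, X m - Polynomial.aeval (X i) (g m) ∈ J) : RingHom.ker (aeval g) ≤ J := by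
  let s := (Ideal.Quotient.mkₐ R J).comp (Polynomial.aeval (X i))
  have hs : s.comp (aeval g) = Ideal.Quotient.mkₐ R J := by
    refine algHom_ext fun m => ?_
    simpa [s, Ideal.Quotient.mkₐ_eq_mk, Ideal.Quotient.eq] using J.neg_mem (h m)
  intro f hf
  rw [← Ideal.mk_ker (I := J), RingHom.mem_ker, ← Ideal.Quotient.mkₐ_eq_mk R, ← hs]
  simp [RingHom.mem_ker.mp hf]

theorem isPrime_span_X_add_X_X {R : Type*} [CommRing R] [IsDomain R] {i j k : Fin 3}
    (hij : i ≠ j) (hik : i ≠ k) (hjk : j ≠ k) :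
    (Ideal.span {(X i + X j : MvPolynomial (Fin 3) R), X k}).IsPrime := by
  let g : Fin 3 → Polynomial R := fun m => if m = i then Polynomial.X else
    if m = j then -Polynomial.X else 0
  suffices Ideal.span {(X i + X j : MvPolynomial (Fin 3) R), X k} = RingHom.ker (aeval g) by
    rw [this]; exact RingHom.ker_isPrime _
  refine le_antisymm ?_ (ker_aeval_le_of_forall_X_sub_mem g i _ fun m => ?_)
  · rw [Ideal.span_le]
    rintro _ (rfl | rfl) <;> simp [g, hij.symm, hik.symm, hjk.symm]
  · by_cases hmi : m = i
    · simp [g, hmi]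
    by_cases hmj : m = j
    · subst hmj
      simpa [g, hij.symm, add_comm] using Ideal.subset_span (by simp)
    obtain rfl : m = k := by omega
    simpa [g, hmi, hmj] using Ideal.subset_span (by simp)

theorem zeroLocus_span_pow_three_five_seven {K : Type*} [Field K] [NeZero (3 : K)] :
    zeroLocus K (Ideal.span {(X 0 ^ 3 + X 1 ^ 3 + X 2 ^ 3 : MvPolynomial (Fin 3) K),
        X 0 ^ 5 + X 1 ^ 5 + X 2 ^ 5, X 0 ^ 7 + X 1 ^ 7 + X 2 ^ 7}) =
      zeroLocus K (Ideal.span {(X 0 + X 1 : MvPolynomial (Fin 3) K), X 2}) ∪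
      zeroLocus K (Ideal.span {(X 0 + X 2 : MvPolynomial (Fin 3) K), X 1}) ∪
      zeroLocus K (Ideal.span {(X 1 + X 2 : MvPolynomial (Fin 3) K), X 0}) := by
  ext x
  simp only [zeroLocus_span, Set.mem_union, Set.mem_ofPred_eq, Set.mem_insert_iff,
    Set.mem_singleton_iff, forall_eq_or_imp, forall_eq, map_add, map_pow, aeval_X, or_assoc]
  exact pow_three_five_seven_eq_zero_iff

end MvPolynomial

/-- In `ℂ[x₁,x₂,x₃]`, the radical of the ideal generated by the power sums
`p₃, p₅, p₇` equals `⟨x₁+x₂, x₃⟩ ∩ ⟨x₁+x₃, x₂⟩ ∩ ⟨x₂+x₃, x₁⟩`. -/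
theorem radical_powerSums_357 :
    (Ideal.span {(X 0 ^ 3 + X 1 ^ 3 + X 2 ^ 3 : MvPolynomial (Fin 3) ℂ),
        X 0 ^ 5 + X 1 ^ 5 + X 2 ^ 5,
        X 0 ^ 7 + X 1 ^ 7 + X 2 ^ 7}).radical =
      Ideal.span {(X 0 + X 1 : MvPolynomial (Fin 3) ℂ), X 2} ⊓
      Ideal.span {(X 0 + X 2 : MvPolynomial (Fin 3) ℂ), X 1} ⊓
      Ideal.span {(X 1 + X 2 : MvPolynomial (Fin 3) ℂ), X 0} := by
  have h₁ := isPrime_span_X_add_X_X (R := ℂ) (i := 0) (j := 1) (k := 2) (by decide) (by decide)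
    (by decide)
  have h₂ := isPrime_span_X_add_X_X (R := ℂ) (i := 0) (j := 2) (k := 1) (by decide) (by decide)
    (by decide)
  have h₃ := isPrime_span_X_add_X_X (R := ℂ) (i := 1) (j := 2) (k := 0) (by decide) (by decide)
    (by decide)
  rw [← vanishingIdeal_zeroLocus_eq_radical (K := ℂ), zeroLocus_span_pow_three_five_seven,
    vanishingIdeal_union, vanishingIdeal_union, IsPrime.vanishingIdeal_zeroLocus,
    IsPrime.vanishingIdeal_zeroLocus, IsPrime.vanishingIdeal_zeroLocus]
end
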